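/- arXiv:1502.01118 — 2 statements merged into one kernel-verified Lean document; each statement's English description precedes it below -/
import Mathlib

section
/- Let P be a Borel probability measure on ℝ^d × ℝ with (X,Y) ∼ P. Let (b_n^0)_{n≥1} be a sequence in ℝ, (b_n)_{n≥1} a sequence in ℝ^d, and (A_n)_{n≥1} a sequence of Borel sets in ℝ^d × ℝ satisfying limsup_n P[A_n] > 0 and limsup_n E_P[|b_n^0 + b_nᵀX − Y|² · 1_{A_n}(X,Y)] < ∞. Then there exist a subsequence of indices (n_k)_{k≥1}, real numbers d_k^0 with d_k^0 → d^0 ∈ ℝ, vectors d_k ∈ ℝ^d with d_k → d ∈ ℝ^d, and Borel sets D_k with D_k ⊆ A_{n_k} and P[A_{n_k} \ D_k] → 0, such that for every k ≥ 1, (b_{n_k}^0 + b_{n_k}ᵀX − Y)·1_{D_k}(X,Y) = (d_k^0 + d_kᵀX − Y)·1_{D_k}(X,Y) holds P-almost surely. -/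
open MeasureTheory Filter Topology Matrix

noncomputable section

abbrev Vec (d : ℕ) := Fin d → ℝ

structure CWMParam (d G : ℕ) where
  pi : Fin G → ℝ
  mu : Fin G → Vec d
  Sigma : Fin G → Matrix (Fin d) (Fin d) ℝ
  b0 : Fin G → ℝ
  b : Fin G → Vec d
  sigma2 : Fin G → ℝ
  pi_nonneg : ∀ g, 0 ≤ pi g
  pi_sum : ∑ g, pi g = 1
  Sigma_posdef : ∀ g, (Sigma g).PosDef
  sigma2_pos : ∀ g, 0 < sigma2 g

variable {d G : ℕ}

/-- The `l`-th eigenvalue of the `g`-th scatter matrix. -/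
def CWMParam.eigval (θ : CWMParam d G) (g : Fin G) (l : Fin d) : ℝ :=
  (θ.Sigma_posdef g).isHermitian.eigenvalues l

/-- The constrained parameter set `Θ_{c_X, c_ε}`. -/
def ThetaSet (d G : ℕ) (cX ceps : ℝ) : Set (CWMParam d G) :=
  {θ | (∀ g1 g2 : Fin G, ∀ l1 l2 : Fin d, θ.eigval g1 l1 ≤ cX * θ.eigval g2 l2) ∧
       (∀ g1 g2 : Fin G, θ.sigma2 g1 ≤ ceps * θ.sigma2 g2)}

/-- Univariate Gaussian density. -/
def gauss1 (y m s2 : ℝ) : ℝ :=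
  (Real.sqrt (2 * Real.pi * s2))⁻¹ * Real.exp (-((y - m) ^ 2) / (2 * s2))

/-- `d`-variate Gaussian density. -/
def gaussd (d : ℕ) (x mu : Vec d) (S : Matrix (Fin d) (Fin d) ℝ) : ℝ :=
  (2 * Real.pi) ^ (-(d : ℝ) / 2) * (Real.sqrt S.det)⁻¹ *
    Real.exp (-(dotProduct (x - mu) (S⁻¹ *ᵥ (x - mu))) / 2)

/-- The `g`-th mixture component density `D_g(x, y; θ)`. -/
def Dg (θ : CWMParam d G) (g : Fin G) (z : Vec d × ℝ) : ℝ :=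
  gauss1 z.2 (dotProduct (θ.b g) z.1 + θ.b0 g) (θ.sigma2 g)
    * gaussd d z.1 (θ.mu g) (θ.Sigma g) * θ.pi g

/-- The mixture density `D(x, y; θ)`. -/
def Dfun (θ : CWMParam d G) (z : Vec d × ℝ) : ℝ := ∑ g, Dg θ g z

/-- The trimming threshold `R(θ, P)`. -/
def Rfun (α : ℝ) (θ : CWMParam d G) (P : Measure (Vec d × ℝ)) : ℝ :=
  sSup {u : ℝ | 1 - α ≤ (P {z | u ≤ Dfun θ z}).toReal}

/-- The trimming set `A(θ, P)`. -/
def Aset (α : ℝ) (θ : CWMParam d G) (P : Measure (Vec d × ℝ)) : Set (Vec d × ℝ) :=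
  {z | Rfun α θ P ≤ Dfun θ z}

/-- The trimmed log-likelihood functional `L(θ, P)`. -/
def Lfun (α : ℝ) (θ : CWMParam d G) (P : Measure (Vec d × ℝ)) : ℝ :=
  ∫ z in Aset α θ P, Real.log (Dfun θ z) ∂P

/-- Condition (PR). -/
def PRcond (d G : ℕ) (α : ℝ) (P : Measure (Vec d × ℝ)) : Prop :=
  ∀ B : Set (Vec d × ℝ), MeasurableSet B → 1 - α ≤ (P B).toReal →
    (∀ (b0 : Fin G → ℝ) (b : Fin G → Vec d),
      0 < P (B \ ⋃ g, {z | z.2 = dotProduct (b g) z.1 + b0 g})) ∧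
    (∀ mu : Fin G → Vec d, 0 < P (B \ ⋃ g, {z | z.1 = mu g}))

/-- Empirical measure of the first `n` observations. -/
def empMeasure (obs : ℕ → Vec d × ℝ) (n : ℕ) : Measure (Vec d × ℝ) :=
  (n : ENNReal)⁻¹ • ∑ i ∈ Finset.range n, Measure.dirac (obs i)

/-- Topology on parameters: the one induced by the product of all components. -/
instance : TopologicalSpace (CWMParam d G) :=
  TopologicalSpace.induced
    (fun θ => (θ.pi, θ.mu, θ.Sigma, θ.b0, θ.b, θ.sigma2)) inferInstance

/-!
Write `b⁰ + bᵀx` as the linear form `(b⁰, b) ⬝ᵥ (1, x)`. By Chebyshev's inequality and the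
tightness of `Y`, the uniform `L²` bound makes these forms bounded in probability on `A n`.
We induct on the number of coefficients. If the coefficient vectors have a bounded subsequence,
a convergent subsequence does the job. Otherwise their directions converge along a subsequence
to a unit vector `v`; since the forms stay bounded in probability while their coefficients blow
up, the mass of `A n` concentrates on the hyperplane `v ⬝ᵥ (1, X) = 0`, and there one coordinate
can be eliminated, leaving the same problem with one coefficient fewer.
-/

open scoped ENNReal

lemma Fin.dotProduct_eq_removeNth_dotProduct {α : Type*} [NonUnitalNonAssocSemiring α]
    {m : ℕ} {w x : Fin (m + 1) → α} {i : Fin (m + 1)} (hw : w i = 0) :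
    w ⬝ᵥ x = i.removeNth w ⬝ᵥ i.removeNth x := by
  simp [dotProduct, Fin.sum_univ_succAbove _ i, hw, Fin.removeNth]

section BoundedInProbability

variable {Ω : Type*} [MeasurableSpace Ω] {μ : Measure Ω}

def BoundedInProbOn (μ : Measure Ω) (g : ℕ → Ω → ℝ) (B : ℕ → Set Ω) : Prop :=
  ∀ η : ℝ≥0∞, 0 < η → ∃ T : ℝ, ∀ᶠ n in atTop, μ (B n ∩ {ω | T ≤ |g n ω|}) ≤ η

namespace BoundedInProbOn

variable {g g' : ℕ → Ω → ℝ} {B B' : ℕ → Set Ω}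

lemma mono (h : BoundedInProbOn μ g B) (hB : ∀ n, B' n ⊆ B n) : BoundedInProbOn μ g B' :=
  fun η hη => (h η hη).imp fun _ hT => hT.mono fun n hn =>
    (measure_mono (Set.inter_subset_inter_left _ (hB n))).trans hn

lemma congr (h : BoundedInProbOn μ g B) (hg : ∀ n, ∀ ω ∈ B n, g n ω = g' n ω) :
    BoundedInProbOn μ g' B :=
  fun η hη => (h η hη).imp fun _ hT => hT.mono fun n hn => by
    refine (measure_mono ?_).trans hn
    rintro ω ⟨hω, hle⟩
    exact ⟨hω, by rwa [Set.mem_ofPred_eq, hg n ω hω]⟩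

lemma comp (h : BoundedInProbOn μ g B) {ψ : ℕ → ℕ} (hψ : Tendsto ψ atTop atTop) :
    BoundedInProbOn μ (g ∘ ψ) (B ∘ ψ) :=
  fun η hη => (h η hη).imp fun _ hT => hψ.eventually hT

lemma add (hg : BoundedInProbOn μ g B) (hg' : BoundedInProbOn μ g' B) :
    BoundedInProbOn μ (g + g') B := by
  intro η hη
  obtain ⟨T, hT⟩ := hg (η / 2) (ENNReal.half_pos hη.ne')
  obtain ⟨T', hT'⟩ := hg' (η / 2) (ENNReal.half_pos hη.ne')
  refine ⟨T + T', (hT.and hT').mono fun n ⟨hn, hn'⟩ => ?_⟩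
  have hsplit : B n ∩ {ω | T + T' ≤ |(g + g') n ω|}
      ⊆ (B n ∩ {ω | T ≤ |g n ω|}) ∪ (B n ∩ {ω | T' ≤ |g' n ω|}) := by
    rintro ω ⟨hω, hle : T + T' ≤ |g n ω + g' n ω|⟩
    by_cases hc : T ≤ |g n ω|
    · exact Or.inl ⟨hω, hc⟩
    · have := abs_add_le (g n ω) (g' n ω)
      exact Or.inr ⟨hω, show T' ≤ |g' n ω| by linarith⟩
  calc μ (B n ∩ {ω | T + T' ≤ |(g + g') n ω|})
      ≤ η / 2 + η / 2 :=
        (measure_mono hsplit).trans ((measure_union_le _ _).trans (add_le_add hn hn'))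
    _ = η := ENNReal.add_halves η

lemma const [IsFiniteMeasure μ] {Y : Ω → ℝ} (hY : Measurable Y) (B : ℕ → Set Ω) :
    BoundedInProbOn μ (fun _ => Y) B := by
  have htail : Tendsto (fun T : ℝ => μ {ω | T ≤ |Y ω|}) atTop (𝓝 0) := by
    have hempty : ⋂ T : ℝ, {ω | T ≤ |Y ω|} = ∅ :=
      Set.eq_empty_of_forall_notMem fun ω hω =>
        (lt_add_one |Y ω|).not_ge (Set.mem_iInter.1 hω (|Y ω| + 1))
    simpa [Function.comp_def, hempty] using tendsto_measure_iInter_atTop (μ := μ)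
      (fun T => (measurableSet_le measurable_const hY.abs).nullMeasurableSet)
      (fun T T' hTT' ω (hω : T' ≤ |Y ω|) => hTT'.trans hω) ⟨0, measure_ne_top μ _⟩
  intro η hη
  obtain ⟨T, hT⟩ := (ENNReal.tendsto_nhds_zero.1 htail η hη).exists
  exact ⟨T, Eventually.of_forall fun n => (measure_mono Set.inter_subset_right).trans hT⟩

lemma of_limsup_lintegral_sq_lt_top {h : ℕ → Ω → ℝ} (hm : ∀ n, Measurable (h n))
    (hlim : limsup (fun n => ∫⁻ ω in B n, ENNReal.ofReal (h n ω ^ 2) ∂μ) atTop < ⊤) :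
    BoundedInProbOn μ h B := by
  obtain ⟨C, hlimC, hC⟩ := exists_between hlim
  have hint : ∀ᶠ n in atTop, ∫⁻ ω in B n, ENNReal.ofReal (h n ω ^ 2) ∂μ < C :=
    eventually_lt_of_limsup_lt hlimC
  have hCT : Tendsto (fun T : ℝ => C / ENNReal.ofReal (T ^ 2)) atTop (𝓝 0) := by
    simpa using ENNReal.Tendsto.const_div
      (ENNReal.tendsto_ofReal_atTop.comp (tendsto_pow_atTop two_ne_zero)) (Or.inr hC.ne)
  intro η hη
  obtain ⟨T, hTη, hTpos⟩ :=
    ((ENNReal.tendsto_nhds_zero.1 hCT η hη).and (eventually_gt_atTop 0)).exists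
  refine ⟨T, hint.mono fun n hn => ?_⟩
  have hT2 : ENNReal.ofReal (T ^ 2) ≠ 0 := by simpa using hTpos.ne'
  calc μ (B n ∩ {ω | T ≤ |h n ω|})
      ≤ μ.restrict (B n) {ω | ENNReal.ofReal (T ^ 2) ≤ ENNReal.ofReal (h n ω ^ 2)} := by
        rw [Set.inter_comm]
        refine (measure_mono (Set.inter_subset_inter_left _ fun ω (hω : T ≤ |h n ω|) => ?_)).trans
          (Measure.le_restrict_apply _ _)
        exact ENNReal.ofReal_le_ofReal (sq_abs (h n ω) ▸ pow_le_pow_left₀ hTpos.le hω 2)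
    _ ≤ (∫⁻ ω in B n, ENNReal.ofReal (h n ω ^ 2) ∂μ) / ENNReal.ofReal (T ^ 2) :=
        meas_ge_le_lintegral_div (by fun_prop) hT2 ENNReal.ofReal_ne_top
    _ ≤ C / ENNReal.ofReal (T ^ 2) := ENNReal.div_le_div_right hn.le _
    _ ≤ η := hTη

lemma tendsto_measure_inter_le_abs_inv_mul (h : BoundedInProbOn μ g B) {c : ℕ → ℝ}
    (hc : Tendsto c atTop atTop) {δ : ℝ} (hδ : 0 < δ) :
    Tendsto (fun n => μ (B n ∩ {ω | δ ≤ |(c n)⁻¹ * g n ω|})) atTop (𝓝 0) := by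
  refine ENNReal.tendsto_nhds_zero.2 fun η hη => ?_
  obtain ⟨T, hT⟩ := h η hη
  filter_upwards [hT, hc.eventually_ge_atTop (T / δ), hc.eventually_gt_atTop 0]
    with n hn hcT hcpos
  refine (measure_mono (Set.inter_subset_inter_right _ fun ω (hω : δ ≤ _) => ?_)).trans hn
  rw [abs_mul, abs_inv, abs_of_pos hcpos, inv_mul_eq_div, le_div_iff₀ hcpos] at hω
  show T ≤ |g n ω|
  calc T ≤ c n * δ := (div_le_iff₀ hδ).1 hcT
    _ ≤ |g n ω| := by linarith

end BoundedInProbOn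

variable {B : ℕ → Set Ω}

lemma tendsto_measure_inter_le_abs_of_tendstoInMeasure {g : ℕ → Ω → ℝ} {g₀ : Ω → ℝ}
    (hg : TendstoInMeasure μ g atTop g₀)
    (h : ∀ δ > 0, Tendsto (fun n => μ (B n ∩ {ω | δ ≤ |g n ω|})) atTop (𝓝 0))
    {δ : ℝ} (hδ : 0 < δ) :
    Tendsto (fun n => μ (B n ∩ {ω | δ ≤ |g₀ ω|})) atTop (𝓝 0) := by
  have hsum := (h (δ / 2) (half_pos hδ)).add (tendstoInMeasure_iff_dist.1 hg (δ / 2) (half_pos hδ))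
  rw [add_zero] at hsum
  refine tendsto_of_tendsto_of_tendsto_of_le_of_le tendsto_const_nhds hsum (fun _ => zero_le)
    fun n => (measure_mono ?_).trans (measure_union_le _ _)
  rintro ω ⟨hω, hle : δ ≤ |g₀ ω|⟩
  by_cases hc : δ / 2 ≤ |g n ω|
  · exact Or.inl ⟨hω, hc⟩
  · refine Or.inr (show δ / 2 ≤ dist (g n ω) (g₀ ω) from ?_)
    have := abs_sub_abs_le_abs_sub (g₀ ω) (g n ω)
    rw [Real.dist_eq, abs_sub_comm]
    linarith

lemma tendsto_measure_diff_setOf_eq_zero [IsFiniteMeasure μ] {g₀ : Ω → ℝ} (hg₀ : Measurable g₀)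
    (h : ∀ δ > 0, Tendsto (fun n => μ (B n ∩ {ω | δ ≤ |g₀ ω|})) atTop (𝓝 0)) :
    Tendsto (fun n => μ (B n \ {ω | g₀ ω = 0})) atTop (𝓝 0) := by
  set S : ℝ → Set Ω := fun δ => {ω | g₀ ω ≠ 0 ∧ |g₀ ω| < δ}
  have hS : Tendsto (μ ∘ S) (𝓝[>] 0) (𝓝 0) := by
    have hempty : ⋂ δ > (0 : ℝ), S δ = ∅ :=
      Set.eq_empty_of_forall_notMem fun ω hω => by
        have hpos : 0 < |g₀ ω| := abs_pos.2 (Set.mem_iInter₂.1 hω 1 one_pos).1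
        exact (Set.mem_iInter₂.1 hω _ hpos).2.false
    simpa [hempty] using tendsto_measure_biInter_gt (μ := μ) (s := S) (a := 0)
      (fun δ _ => ((hg₀ (measurableSet_singleton 0)).compl.inter
        (measurableSet_lt hg₀.abs measurable_const)).nullMeasurableSet)
      (fun δ δ' _ hδδ' ω hω => ⟨hω.1, hω.2.trans_le hδδ'⟩) ⟨1, one_pos, measure_ne_top μ _⟩
  refine ENNReal.tendsto_nhds_zero.2 fun η hη => ?_
  obtain ⟨δ, hSδ, hδ⟩ := ((ENNReal.tendsto_nhds_zero.1 hS (η / 2) (ENNReal.half_pos hη.ne')).and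
    self_mem_nhdsWithin).exists
  filter_upwards [ENNReal.tendsto_nhds_zero.1 (h δ hδ) (η / 2) (ENNReal.half_pos hη.ne')] with n hn
  have hsplit : B n \ {ω | g₀ ω = 0} ⊆ (B n ∩ {ω | δ ≤ |g₀ ω|}) ∪ S δ := by
    rintro ω ⟨hω, hne : g₀ ω ≠ 0⟩
    by_cases hc : δ ≤ |g₀ ω|
    · exact Or.inl ⟨hω, hc⟩
    · exact Or.inr ⟨hne, not_le.1 hc⟩
  calc μ (B n \ {ω | g₀ ω = 0}) ≤ η / 2 + η / 2 :=
        (measure_mono hsplit).trans ((measure_union_le _ _).trans (add_le_add hn hSδ))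
    _ = η := ENNReal.add_halves η

lemma BoundedInProbOn.tendsto_measure_diff_hyperplane [IsFiniteMeasure μ] {m : ℕ}
    {Φ : Ω → Fin m → ℝ} (hΦ : Measurable Φ) {f : ℕ → Fin m → ℝ}
    (h : BoundedInProbOn μ (fun n ω => f n ⬝ᵥ Φ ω) B) (hf : Tendsto (fun n => ‖f n‖) atTop atTop)
    {v : Fin m → ℝ} (hv : Tendsto (fun n => ‖f n‖⁻¹ • f n) atTop (𝓝 v)) :
    Tendsto (fun n => μ (B n \ {ω | v ⬝ᵥ Φ ω = 0})) atTop (𝓝 0) := by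
  have hconv : TendstoInMeasure μ (fun n ω => (‖f n‖⁻¹ • f n) ⬝ᵥ Φ ω) atTop
      (fun ω => v ⬝ᵥ Φ ω) :=
    tendstoInMeasure_of_tendsto_ae (fun n => by fun_prop)
      (ae_of_all _ fun ω => ((by fun_prop : Continuous fun w => w ⬝ᵥ Φ ω).tendsto v).comp hv)
  refine tendsto_measure_diff_setOf_eq_zero (by fun_prop) fun δ hδ =>
    tendsto_measure_inter_le_abs_of_tendstoInMeasure hconv (fun δ hδ => ?_) hδ
  simpa only [smul_dotProduct, smul_eq_mul] using h.tendsto_measure_inter_le_abs_inv_mul hf hδ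

variable [IsFiniteMeasure μ]

lemma BoundedInProbOn.exists_subseq_eq_removeNth_on_hyperplane {m : ℕ}
    {Φ : Ω → Fin (m + 1) → ℝ} (hΦ : Measurable Φ) (hB : ∀ n, MeasurableSet (B n))
    {f : ℕ → Fin (m + 1) → ℝ} (h : BoundedInProbOn μ (fun n ω => f n ⬝ᵥ Φ ω) B)
    (hf : Tendsto (fun n => ‖f n‖) atTop atTop) :
    ∃ φ : ℕ → ℕ, StrictMono φ ∧ ∃ (i : Fin (m + 1)) (g : ℕ → Fin m → ℝ) (E : ℕ → Set Ω),
      (∀ n, MeasurableSet (E n)) ∧ (∀ n, E n ⊆ B (φ n)) ∧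
      Tendsto (fun n => μ (B (φ n) \ E n)) atTop (𝓝 0) ∧
      ∀ n, ∀ ω ∈ E n, f (φ n) ⬝ᵥ Φ ω = g n ⬝ᵥ i.removeNth (Φ ω) := by
  obtain ⟨v, -, φ, hφ, hv⟩ :=
    tendsto_subseq_of_bounded (Metric.isBounded_closedBall (x := 0) (r := 1))
    (x := fun n => ‖f n‖⁻¹ • f n) fun n => by
      rw [mem_closedBall_zero_iff, norm_smul, norm_inv, norm_norm]
      exact inv_mul_le_one_of_le₀ le_rfl (norm_nonneg _)
  have hf' := hf.comp hφ.tendsto_atTop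
  have hv_norm : ‖v‖ = 1 := tendsto_nhds_unique hv.norm <| tendsto_const_nhds.congr' <|
    (hf'.eventually_gt_atTop 0).mono fun n hn => by
      simp only [Function.comp_apply] at hn ⊢
      rw [norm_smul, norm_inv, norm_norm, inv_mul_cancel₀ hn.ne']
  have hv0 : v ≠ 0 := ne_zero_of_norm_ne_zero (by rw [hv_norm]; exact one_ne_zero)
  obtain ⟨i, hi⟩ := Function.ne_iff.1 hv0
  -- subtracting the right multiple of `v` kills the `i`-th coefficient without changing
  -- the values on the hyperplane
  refine ⟨φ, hφ, i, fun n => i.removeNth (f (φ n) - (f (φ n) i / v i) • v),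
    fun n => B (φ n) ∩ {ω | v ⬝ᵥ Φ ω = 0},
    fun n => (hB _).inter (measurableSet_eq_fun (by fun_prop) measurable_const),
    fun n => Set.inter_subset_left, ?_, ?_⟩
  · simpa only [Set.sdiff_self_inter, Function.comp_apply] using
      (h.comp hφ.tendsto_atTop).tendsto_measure_diff_hyperplane hΦ hf' hv
  · rintro n ω ⟨-, hω : v ⬝ᵥ Φ ω = 0⟩
    rw [← Fin.dotProduct_eq_removeNth_dotProduct (w := f (φ n) - (f (φ n) i / v i) • v)
        (by simp [div_mul_cancel₀ _ hi]),
      sub_dotProduct, smul_dotProduct, hω, smul_zero, sub_zero]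

theorem BoundedInProbOn.exists_subseq_convergent_coeffs {m : ℕ} {Φ : Ω → Fin m → ℝ}
    (hΦ : Measurable Φ) (hB : ∀ n, MeasurableSet (B n)) {f : ℕ → Fin m → ℝ}
    (hf : BoundedInProbOn μ (fun n ω => f n ⬝ᵥ Φ ω) B) :
    ∃ ψ : ℕ → ℕ, StrictMono ψ ∧ ∃ (c : ℕ → Fin m → ℝ) (c₀ : Fin m → ℝ) (E : ℕ → Set Ω),
      (∀ k, MeasurableSet (E k)) ∧ (∀ k, E k ⊆ B (ψ k)) ∧
      Tendsto (fun k => μ (B (ψ k) \ E k)) atTop (𝓝 0) ∧ Tendsto c atTop (𝓝 c₀) ∧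
      ∀ k, ∀ ω ∈ E k, f (ψ k) ⬝ᵥ Φ ω = c k ⬝ᵥ Φ ω := by
  induction m generalizing B with
  | zero =>
    exact ⟨id, strictMono_id, 0, 0, B, hB, fun _ => subset_rfl, by simp, tendsto_const_nhds,
      fun _ _ _ => by simp [dotProduct]⟩
  | succ m ih =>
    by_cases hbdd : ∃ R, ∃ᶠ n in atTop, f n ∈ Metric.closedBall 0 R
    · obtain ⟨R, hR⟩ := hbdd
      obtain ⟨c₀, -, ψ, hψ, hc⟩ :=
        tendsto_subseq_of_frequently_bounded Metric.isBounded_closedBall hR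
      exact ⟨ψ, hψ, f ∘ ψ, c₀, B ∘ ψ, fun k => hB _, fun _ => subset_rfl, by simp, hc,
        fun _ _ _ => rfl⟩
    push Not at hbdd
    have hf_top : Tendsto (fun n => ‖f n‖) atTop atTop := tendsto_atTop.2 fun R =>
      (hbdd R).mono fun n hn => (not_le.1 (by simpa using hn)).le
    obtain ⟨φ, hφ, i, g, E, hEm, hEB, hBE, hfg⟩ :=
      hf.exists_subseq_eq_removeNth_on_hyperplane hΦ hB hf_top
    obtain ⟨ψ, hψ, c, c₀, D, hDm, hDE, hED, hc, hgc⟩ :=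
      ih (Φ := fun ω => i.removeNth (Φ ω))
        (measurable_pi_lambda _ fun j => (measurable_pi_apply _).comp hΦ) hEm (f := g)
        (((hf.comp hφ.tendsto_atTop).mono hEB).congr hfg)
    refine ⟨φ ∘ ψ, hφ.comp hψ, fun k => i.insertNth 0 (c k), i.insertNth 0 c₀, D, hDm,
      fun k => (hDE k).trans (hEB _), ?_, ?_, fun k ω hω => ?_⟩
    · refine tendsto_of_tendsto_of_tendsto_of_le_of_le tendsto_const_nhds
        (by simpa using (hBE.comp hψ.tendsto_atTop).add hED) (fun _ => zero_le) fun k =>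
        (measure_mono (sdiff_triangle _ (E (ψ k)) _)).trans (measure_union_le _ _)
    · exact ((continuous_const.finInsertNth (A := fun _ => ℝ) i continuous_id).tendsto c₀).comp hc
    · rw [Function.comp_apply, hfg _ ω (hDE k hω), hgc k ω hω,
        Fin.dotProduct_eq_removeNth_dotProduct (Fin.insertNth_apply_same _ _ _),
        Fin.removeNth_insertNth]

end BoundedInProbability

theorem statement2_general (d : ℕ)
    (P : Measure (Vec d × ℝ)) [IsProbabilityMeasure P]
    (b0 : ℕ → ℝ) (b : ℕ → Vec d) (A : ℕ → Set (Vec d × ℝ))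
    (hAmeas : ∀ n, MeasurableSet (A n))
    (h2 : Filter.limsup
        (fun n => ∫⁻ z in A n, ENNReal.ofReal ((b0 n + dotProduct (b n) z.1 - z.2) ^ 2) ∂P)
        atTop < ⊤) :
    ∃ φ : ℕ → ℕ, StrictMono φ ∧
      ∃ (d0 : ℕ → ℝ) (dv : ℕ → Vec d) (D : ℕ → Set (Vec d × ℝ)) (dl0 : ℝ) (dl : Vec d),
        (∀ k, MeasurableSet (D k)) ∧ (∀ k, D k ⊆ A (φ k)) ∧
        Tendsto (fun k => P (A (φ k) \ D k)) atTop (nhds 0) ∧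
        Tendsto d0 atTop (nhds dl0) ∧ Tendsto dv atTop (nhds dl) ∧
        ∀ k, ∀ᵐ z ∂P, z ∈ D k →
          b0 (φ k) + dotProduct (b (φ k)) z.1 - z.2
            = d0 k + dotProduct (dv k) z.1 - z.2 := by
  have hcons : ∀ (c : Fin (d + 1) → ℝ) (z : Vec d × ℝ),
      c ⬝ᵥ Fin.cons 1 z.1 = c 0 + Fin.tail c ⬝ᵥ z.1 := fun c z => by
    simp [dotProduct, Fin.sum_univ_succ, Fin.tail]
  have hbounded : BoundedInProbOn P
      (fun n z => (Fin.cons (b0 n) (b n) : Fin (d + 1) → ℝ) ⬝ᵥ Fin.cons 1 z.1) A := by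
    refine ((BoundedInProbOn.of_limsup_lintegral_sq_lt_top (by fun_prop) h2).add
      (BoundedInProbOn.const measurable_snd A)).congr fun n z _ => ?_
    simp [hcons]
  obtain ⟨ψ, hψ, c, c₀, D, hDm, hDA, hAD, hc, hbc⟩ :=
    hbounded.exists_subseq_convergent_coeffs (by fun_prop) hAmeas
  refine ⟨ψ, hψ, fun k => c k 0, fun k => Fin.tail (c k), D, c₀ 0, Fin.tail c₀, hDm, hDA, hAD,
    ((continuous_apply 0).tendsto c₀).comp hc,
    ((by fun_prop : Continuous Fin.tail).tendsto c₀).comp hc,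
    fun k => ae_of_all _ fun z hz => ?_⟩
  have := hbc k z hz
  simp only [hcons, Fin.cons_zero, Fin.tail_cons] at this
  rw [this]

/-- Lemma 1: bounded representation of regression coefficients. -/
theorem statement2 (d : ℕ) (hd : 1 ≤ d)
    (P : Measure (Vec d × ℝ)) [IsProbabilityMeasure P]
    (b0 : ℕ → ℝ) (b : ℕ → Vec d) (A : ℕ → Set (Vec d × ℝ))
    (hAmeas : ∀ n, MeasurableSet (A n))
    (h1 : 0 < Filter.limsup (fun n => P (A n)) atTop)
    (h2 : Filter.limsup
        (fun n => ∫⁻ z in A n, ENNReal.ofReal ((b0 n + dotProduct (b n) z.1 - z.2) ^ 2) ∂P)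
        atTop < ⊤) :
    ∃ φ : ℕ → ℕ, StrictMono φ ∧
      ∃ (d0 : ℕ → ℝ) (dv : ℕ → Vec d) (D : ℕ → Set (Vec d × ℝ)) (dl0 : ℝ) (dl : Vec d),
        (∀ k, MeasurableSet (D k)) ∧ (∀ k, D k ⊆ A (φ k)) ∧
        Tendsto (fun k => P (A (φ k) \ D k)) atTop (nhds 0) ∧
        Tendsto d0 atTop (nhds dl0) ∧ Tendsto dv atTop (nhds dl) ∧
        ∀ k, ∀ᵐ z ∂P, z ∈ D k →
          b0 (φ k) + dotProduct (b (φ k)) z.1 - z.2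
            = d0 k + dotProduct (dv k) z.1 - z.2 :=
  statement2_general d P b0 b A hAmeas h2
end
end

section
/- There exists a constant C, depending only on d, G and α (and not on θ), such that for every Borel probability measure P on ℝ^d × ℝ and every parameter θ: L(θ,P) ≤ −(1/2)[ log(min_g σ_g²)·P[A(θ,P)] + E_P[min_g |b_g^0 + b_gᵀX − Y|²·1_{A(θ,P)}(X,Y)] / max_g σ_g² ] − (1/2)[ d·log(min_{g,l} λ_l(Σ_g))·P[A(θ,P)] + E_P[min_g ‖X − μ_g‖²·1_{A(θ,P)}(X,Y)] / max_{g,l} λ_l(Σ_g) ] + C. -/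
open MeasureTheory Filter Topology Matrix

noncomputable section

variable {d G : ℕ}

/-!
Each Gaussian factor of `D_g` is at most its normalising constant at the smallest variance
(resp. eigenvalue) times its exponential at the largest one, and the squared residual
(resp. distance) may be replaced by its minimum over the components. As the weights sum to one,
this bounds `log D` pointwise by the integrand of the right-hand side, so `C = 0` works.
Integrating this bound over the trimmed set is legitimate because `D ≥ R(θ, P) > 0` there: the
threshold is positive since `D > 0` everywhere and `α > 0`.
-/

open Real

lemma inv_sqrt_le_exp_neg_half_log {x c : ℝ} (hc : 0 < c) (hcx : c ≤ x) :
    (√x)⁻¹ ≤ exp (-(1 / 2) * log c) := by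
  have hsqrt : exp (-(1 / 2) * log c) = (√c)⁻¹ := by
    rw [sqrt_eq_rpow, ← rpow_neg hc.le, rpow_def_of_pos hc, mul_comm]
  rw [hsqrt]
  exact inv_anti₀ (sqrt_pos.2 hc) (sqrt_le_sqrt hcx)

lemma gauss1_pos (y m : ℝ) {s : ℝ} (hs : 0 < s) : 0 < gauss1 y m s := by
  unfold gauss1
  positivity

lemma gauss1_le_exp (y m : ℝ) {s smin smax : ℝ} (hsmin : 0 < smin) (hs_ge : smin ≤ s)
    (hs_le : s ≤ smax) :
    gauss1 y m s ≤ exp (-(1 / 2) * (log smin + (y - m) ^ 2 / smax)) := by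
  have hs : 0 < s := hsmin.trans_le hs_ge
  have hnorm : (√(2 * π * s))⁻¹ ≤ exp (-(1 / 2) * log smin) :=
    inv_sqrt_le_exp_neg_half_log hsmin (by nlinarith [pi_gt_three])
  have hexp : exp (-((y - m) ^ 2) / (2 * s)) ≤ exp (-(1 / 2) * ((y - m) ^ 2 / smax)) := by
    have hquot : (y - m) ^ 2 / (2 * smax) ≤ (y - m) ^ 2 / (2 * s) := by gcongr
    rw [exp_le_exp]
    linarith [show -(1 / 2) * ((y - m) ^ 2 / smax) = -((y - m) ^ 2 / (2 * smax)) by ring,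
      neg_div (2 * s) ((y - m) ^ 2)]
  calc gauss1 y m s ≤ exp (-(1 / 2) * log smin) * exp (-(1 / 2) * ((y - m) ^ 2 / smax)) :=
        mul_le_mul hnorm hexp (exp_nonneg _) (exp_nonneg _)
    _ = _ := by rw [← exp_add]; ring_nf

section Matrix

variable {n : Type*} [Fintype n] [DecidableEq n]

lemma dotProduct_mul_diagonal_mul_transpose_mulVec (U : Matrix n n ℝ) (c v : n → ℝ) :
    v ⬝ᵥ ((U * diagonal c * Uᵀ) *ᵥ v) = ∑ l, c l * (Uᵀ *ᵥ v) l ^ 2 := by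
  rw [← mulVec_mulVec, ← mulVec_mulVec, dotProduct_mulVec, ← mulVec_transpose]
  simp only [dotProduct, mulVec_diagonal]
  exact Finset.sum_congr rfl fun l _ => by ring

lemma Matrix.PosDef.dotProduct_self_div_le {S : Matrix n n ℝ} (hS : S.PosDef) {lam : ℝ}
    (hlam : ∀ l, hS.isHermitian.eigenvalues l ≤ lam) (v : n → ℝ) :
    (v ⬝ᵥ v) / lam ≤ v ⬝ᵥ (S⁻¹ *ᵥ v) := by
  set U : Matrix n n ℝ := ↑hS.isHermitian.eigenvectorUnitary
  set eig := hS.isHermitian.eigenvalues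
  have hUU : U * Uᵀ = 1 := by
    simpa [U, Matrix.star_eq_conjTranspose] using
      Matrix.mem_unitaryGroup_iff.mp hS.isHermitian.eigenvectorUnitary.2
  have hUtU : Uᵀ * U = 1 := by
    simpa [U, Matrix.star_eq_conjTranspose] using
      Matrix.mem_unitaryGroup_iff'.mp hS.isHermitian.eigenvectorUnitary.2
  have hspec : S = U * diagonal eig * Uᵀ := by
    simpa [U, eig, Matrix.star_eq_conjTranspose] using hS.isHermitian.spectral_theorem
  have hinv : S⁻¹ = U * diagonal eig⁻¹ * Uᵀ := by
    refine inv_eq_right_inv ?_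
    have hdiag : diagonal eig * diagonal eig⁻¹ = 1 := by
      rw [diagonal_mul_diagonal, ← diagonal_one]
      exact congrArg diagonal (funext fun l => mul_inv_cancel₀ (hS.eigenvalues_pos l).ne')
    calc S * (U * diagonal eig⁻¹ * Uᵀ)
        = U * (diagonal eig * (Uᵀ * U) * diagonal eig⁻¹) * Uᵀ := by
          rw [hspec]; simp only [Matrix.mul_assoc]
      _ = 1 := by rw [hUtU, Matrix.mul_one, hdiag, Matrix.mul_one, hUU]
  have hself : v ⬝ᵥ v = ∑ l, 1 * (Uᵀ *ᵥ v) l ^ 2 := by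
    rw [← dotProduct_mul_diagonal_mul_transpose_mulVec, diagonal_one, Matrix.mul_one, hUU,
      one_mulVec]
  rw [hinv, dotProduct_mul_diagonal_mul_transpose_mulVec, hself, Finset.sum_div]
  refine Finset.sum_le_sum fun l _ => ?_
  rw [one_mul, div_eq_inv_mul, Pi.inv_apply]
  exact mul_le_mul_of_nonneg_right (inv_anti₀ (hS.eigenvalues_pos l) (hlam l)) (sq_nonneg _)

end Matrix

lemma gaussd_pos (x μ : Vec d) {S : Matrix (Fin d) (Fin d) ℝ} (hS : S.PosDef) :
    0 < gaussd d x μ S := by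
  have := hS.det_pos
  unfold gaussd
  positivity

lemma gaussd_le_exp (x μ : Vec d) {S : Matrix (Fin d) (Fin d) ℝ} (hS : S.PosDef)
    {lmin lmax : ℝ} (hlmin : 0 < lmin) (heig_ge : ∀ l, lmin ≤ hS.isHermitian.eigenvalues l)
    (heig_le : ∀ l, hS.isHermitian.eigenvalues l ≤ lmax) :
    gaussd d x μ S ≤ exp (-(1 / 2) * (d * log lmin + (∑ i, (x i - μ i) ^ 2) / lmax)) := by
  have hconst : (2 * π) ^ (-(d : ℝ) / 2) ≤ 1 :=
    rpow_le_one_of_one_le_of_nonpos (by linarith [pi_gt_three])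
      (by linarith [(d.cast_nonneg : (0 : ℝ) ≤ d)])
  have hdet : lmin ^ d ≤ S.det := by
    rw [hS.isHermitian.det_eq_prod_eigenvalues]
    simpa using
      Finset.prod_le_prod (s := Finset.univ) (fun _ _ => hlmin.le) fun l _ => heig_ge l
  have hnorm : (√S.det)⁻¹ ≤ exp (-(1 / 2) * (d * log lmin)) := by
    simpa [log_pow] using inv_sqrt_le_exp_neg_half_log (pow_pos hlmin d) hdet
  have hquad : (∑ i, (x i - μ i) ^ 2) / lmax ≤ (x - μ) ⬝ᵥ (S⁻¹ *ᵥ (x - μ)) := by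
    simpa [dotProduct, sq] using hS.dotProduct_self_div_le heig_le (x - μ)
  have hexp : exp (-((x - μ) ⬝ᵥ (S⁻¹ *ᵥ (x - μ))) / 2)
      ≤ exp (-(1 / 2) * ((∑ i, (x i - μ i) ^ 2) / lmax)) := by
    rw [exp_le_exp]
    linarith
  calc gaussd d x μ S
      ≤ 1 * exp (-(1 / 2) * (d * log lmin))
          * exp (-(1 / 2) * ((∑ i, (x i - μ i) ^ 2) / lmax)) :=
        mul_le_mul (mul_le_mul hconst hnorm (by positivity) zero_le_one) hexp
          (exp_nonneg _) (by positivity)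
    _ = _ := by rw [one_mul, ← exp_add]; ring_nf

namespace CWMParam

variable (θ : CWMParam d G)

def sigma2Min : ℝ := ⨅ g, θ.sigma2 g

def sigma2Max : ℝ := ⨆ g, θ.sigma2 g

def eigvalMin : ℝ := ⨅ g, ⨅ l, θ.eigval g l

def eigvalMax : ℝ := ⨆ g, ⨆ l, θ.eigval g l

def minSqResidual (z : Vec d × ℝ) : ℝ := ⨅ g, (θ.b0 g + dotProduct (θ.b g) z.1 - z.2) ^ 2

def minSqDist (x : Vec d) : ℝ := ⨅ g, ∑ i, (x i - θ.mu g i) ^ 2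

lemma exists_pi_pos : ∃ g, 0 < θ.pi g := by
  obtain ⟨g, -, hg⟩ := Finset.exists_ne_zero_of_sum_ne_zero (θ.pi_sum ▸ one_ne_zero)
  exact ⟨g, (θ.pi_nonneg g).lt_of_ne' hg⟩

lemma nonempty_fin (θ : CWMParam d G) : Nonempty (Fin G) :=
  let ⟨g, _⟩ := θ.exists_pi_pos; ⟨g⟩

lemma sigma2Min_le (g : Fin G) : θ.sigma2Min ≤ θ.sigma2 g :=
  ciInf_le (Finite.bddBelow_range _) g

lemma le_sigma2Max (g : Fin G) : θ.sigma2 g ≤ θ.sigma2Max :=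
  le_ciSup (Finite.bddAbove_range _) g

lemma eigvalMin_le (g : Fin G) (l : Fin d) : θ.eigvalMin ≤ θ.eigval g l :=
  (ciInf_le (Finite.bddBelow_range _) g).trans (ciInf_le (Finite.bddBelow_range _) l)

lemma le_eigvalMax (g : Fin G) (l : Fin d) : θ.eigval g l ≤ θ.eigvalMax :=
  (le_ciSup (Finite.bddAbove_range _) l).trans (le_ciSup (Finite.bddAbove_range (fun g =>
    ⨆ l, θ.eigval g l)) g)

lemma sigma2Min_pos : 0 < θ.sigma2Min := by
  have := θ.nonempty_fin
  obtain ⟨g, hg⟩ := exists_eq_ciInf_of_finite (f := θ.sigma2)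
  rw [sigma2Min, ← hg]
  exact θ.sigma2_pos g

lemma sigma2Max_pos : 0 < θ.sigma2Max :=
  have := θ.nonempty_fin
  (θ.sigma2_pos (Classical.arbitrary _)).trans_le (θ.le_sigma2Max _)

lemma eigval_pos (g : Fin G) (l : Fin d) : 0 < θ.eigval g l :=
  (θ.Sigma_posdef g).eigenvalues_pos l

lemma eigvalMin_pos [Nonempty (Fin d)] : 0 < θ.eigvalMin := by
  have := θ.nonempty_fin
  obtain ⟨g, hg⟩ := exists_eq_ciInf_of_finite (f := fun g => ⨅ l, θ.eigval g l)
  obtain ⟨l, hl⟩ := exists_eq_ciInf_of_finite (f := θ.eigval g)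
  rw [eigvalMin, ← hg, ← hl]
  exact θ.eigval_pos g l

lemma eigvalMax_pos [Nonempty (Fin d)] : 0 < θ.eigvalMax :=
  have := θ.nonempty_fin
  (θ.eigval_pos (Classical.arbitrary _) (Classical.arbitrary _)).trans_le (θ.le_eigvalMax _ _)

lemma minSqResidual_nonneg (z : Vec d × ℝ) : 0 ≤ θ.minSqResidual z :=
  Real.iInf_nonneg fun _ => sq_nonneg _

lemma minSqDist_nonneg (x : Vec d) : 0 ≤ θ.minSqDist x :=
  Real.iInf_nonneg fun _ => Finset.sum_nonneg fun _ _ => sq_nonneg _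

lemma minSqResidual_le (z : Vec d × ℝ) (g : Fin G) :
    θ.minSqResidual z ≤ (z.2 - (dotProduct (θ.b g) z.1 + θ.b0 g)) ^ 2 :=
  (ciInf_le (Finite.bddBelow_range _) g).trans_eq (by ring)

lemma minSqDist_le (x : Vec d) (g : Fin G) : θ.minSqDist x ≤ ∑ i, (x i - θ.mu g i) ^ 2 :=
  ciInf_le (Finite.bddBelow_range _) g

lemma measurable_minSqResidual : Measurable θ.minSqResidual := by
  unfold minSqResidual
  fun_prop

lemma measurable_minSqDist : Measurable θ.minSqDist := by
  unfold minSqDist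
  measurability

end CWMParam

section Density

variable (θ : CWMParam d G)

lemma Dfun_pos (z : Vec d × ℝ) : 0 < Dfun θ z := by
  obtain ⟨g, hg⟩ := θ.exists_pi_pos
  have hprod (g : Fin G) : 0 < gauss1 z.2 (dotProduct (θ.b g) z.1 + θ.b0 g) (θ.sigma2 g)
      * gaussd d z.1 (θ.mu g) (θ.Sigma g) :=
    mul_pos (gauss1_pos _ _ (θ.sigma2_pos g)) (gaussd_pos _ _ (θ.Sigma_posdef g))
  exact Finset.sum_pos' (fun g _ => mul_nonneg (hprod g).le (θ.pi_nonneg g))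
    ⟨g, Finset.mem_univ g, mul_pos (hprod g) hg⟩

lemma measurable_Dfun : Measurable (Dfun θ) := by
  unfold Dfun Dg gauss1 gaussd
  fun_prop

lemma Dfun_le_exp [Nonempty (Fin d)] (z : Vec d × ℝ) :
    Dfun θ z ≤ exp (-(1 / 2) * (log θ.sigma2Min + θ.minSqResidual z / θ.sigma2Max)
      - (1 / 2) * (d * log θ.eigvalMin + θ.minSqDist z.1 / θ.eigvalMax)) := by
  have hsmax := θ.sigma2Max_pos
  have hlmax := θ.eigvalMax_pos
  have hDg (g : Fin G) : Dg θ g z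
      ≤ exp (-(1 / 2) * (log θ.sigma2Min + θ.minSqResidual z / θ.sigma2Max))
        * exp (-(1 / 2) * (d * log θ.eigvalMin + θ.minSqDist z.1 / θ.eigvalMax)) * θ.pi g := by
    have hres := θ.minSqResidual_le z g
    have hdist := θ.minSqDist_le z.1 g
    have hgauss1 := gauss1_le_exp z.2 (dotProduct (θ.b g) z.1 + θ.b0 g) θ.sigma2Min_pos
      (θ.sigma2Min_le g) (θ.le_sigma2Max g)
    have hgaussd := gaussd_le_exp z.1 (θ.mu g) (θ.Sigma_posdef g) θ.eigvalMin_pos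
      (θ.eigvalMin_le g) (θ.le_eigvalMax g)
    have hgaussd_pos := gaussd_pos z.1 (θ.mu g) (θ.Sigma_posdef g)
    unfold Dg
    gcongr
    · exact θ.pi_nonneg g
    · refine hgauss1.trans (exp_le_exp.2 (mul_le_mul_of_nonpos_left ?_ (by norm_num)))
      gcongr
    · refine hgaussd.trans (exp_le_exp.2 (mul_le_mul_of_nonpos_left ?_ (by norm_num)))
      gcongr
  calc Dfun θ z ≤ ∑ g, _ := Finset.sum_le_sum fun g _ => hDg g
    _ = _ := by rw [← Finset.mul_sum, θ.pi_sum, mul_one, ← exp_add]; ring_nf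

end Density

section Trimming

variable {Ω : Type*} [MeasurableSpace Ω]

lemma sSup_measure_superlevel_pos (P : Measure Ω) [IsProbabilityMeasure P] {f : Ω → ℝ}
    {α M : ℝ} (hα : α ∈ Set.Ioo 0 1) (hf_pos : ∀ z, 0 < f z) (hf_le : ∀ z, f z ≤ M) :
    0 < sSup {u : ℝ | 1 - α ≤ (P {z | u ≤ f z}).toReal} := by
  have hbdd : BddAbove {u : ℝ | 1 - α ≤ (P {z | u ≤ f z}).toReal} := by
    refine ⟨M, fun u hu => not_lt.1 fun hMu => ?_⟩
    have hempty : {z | u ≤ f z} = ∅ :=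
      Set.eq_empty_of_forall_notMem fun z hz => (hf_le z).not_gt (hMu.trans_le hz)
    have hu : 1 - α ≤ (P {z | u ≤ f z}).toReal := hu
    rw [hempty, measure_empty, ENNReal.toReal_zero] at hu
    linarith [hα.2]
  obtain ⟨n, hn⟩ : ∃ n : ℕ, 1 - α ≤ (P {z | 1 / ((n : ℝ) + 1) ≤ f z}).toReal := by
    have hmono : Monotone fun n : ℕ => {z | 1 / ((n : ℝ) + 1) ≤ f z} := fun n m hnm z hz =>
      le_trans (one_div_le_one_div_of_le (a := (n : ℝ) + 1) (by positivity)
        (by gcongr)) hz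
    have hunion : ⋃ n : ℕ, {z | 1 / ((n : ℝ) + 1) ≤ f z} = Set.univ :=
      Set.eq_univ_of_forall fun z =>
        Set.mem_iUnion.2 ((exists_nat_one_div_lt (hf_pos z)).imp fun _ => le_of_lt)
    have hlim := tendsto_measure_iUnion_atTop (μ := P) hmono
    rw [hunion, measure_univ] at hlim
    have hlim_real := (ENNReal.tendsto_toReal ENNReal.one_ne_top).comp hlim
    rw [ENNReal.toReal_one] at hlim_real
    exact ((hlim_real.eventually (eventually_gt_nhds (by linarith [hα.1]))).exists).imp
      fun _ => le_of_lt
  exact (by positivity : (0 : ℝ) < 1 / ((n : ℝ) + 1)).trans_le (le_csSup hbdd hn)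

lemma setIntegral_le_sub_of_le_sub {P : Measure Ω} [IsFiniteMeasure P] {A : Set Ω}
    (hA : MeasurableSet A) {h u v : Ω → ℝ} {c m : ℝ} (hh : Measurable h) (hu : Measurable u)
    (hv : Measurable v) (hu_nonneg : ∀ z, 0 ≤ u z) (hv_nonneg : ∀ z, 0 ≤ v z)
    (h_le : ∀ z, h z ≤ c - u z - v z) (h_ge : ∀ z ∈ A, m ≤ h z) :
    ∫ z in A, h z ∂P ≤ c * P.real A - ∫ z in A, u z ∂P - ∫ z in A, v z ∂P := by
  have bounded {φ : Ω → ℝ} (hφ : Measurable φ) (B : ℝ) (hB : ∀ z ∈ A, |φ z| ≤ B) :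
      IntegrableOn φ A P :=
    Measure.integrableOn_of_bounded (measure_ne_top P A) hφ.aestronglyMeasurable
      ((ae_restrict_iff' hA).2 (ae_of_all _ hB))
  have hIh : IntegrableOn h A P := bounded hh (|m| + |c|) fun z hz => by
    refine abs_le.2 ⟨?_, ?_⟩
    · linarith [neg_abs_le m, abs_nonneg c, h_ge z hz]
    · linarith [le_abs_self c, abs_nonneg m, h_le z, hu_nonneg z, hv_nonneg z]
  have hIu : IntegrableOn u A P := bounded hu (c - m) fun z hz => by
    rw [abs_of_nonneg (hu_nonneg z)]; linarith [h_le z, h_ge z hz, hv_nonneg z]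
  have hIv : IntegrableOn v A P := bounded hv (c - m) fun z hz => by
    rw [abs_of_nonneg (hv_nonneg z)]; linarith [h_le z, h_ge z hz, hu_nonneg z]
  calc ∫ z in A, h z ∂P ≤ ∫ z in A, (c - u z - v z) ∂P :=
        setIntegral_mono_on hIh (((integrableOn_const (measure_ne_top P A)).sub hIu).sub hIv)
          hA fun z _ => h_le z
    _ = c * P.real A - ∫ z in A, u z ∂P - ∫ z in A, v z ∂P := by
        rw [integral_sub (f := fun z => c - u z)
            ((integrableOn_const (measure_ne_top P A)).sub hIu) hIv,
          integral_sub (f := fun _ => c) (integrableOn_const (measure_ne_top P A)) hIu,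
          setIntegral_const, smul_eq_mul, mul_comm]

end Trimming

lemma Rfun_pos [Nonempty (Fin d)] {α : ℝ} (hα : α ∈ Set.Ioo 0 1) (P : Measure (Vec d × ℝ))
    [IsProbabilityMeasure P] (θ : CWMParam d G) : 0 < Rfun α θ P :=
  sSup_measure_superlevel_pos P hα (Dfun_pos θ)
    (M := exp (-(1 / 2) * (log θ.sigma2Min + d * log θ.eigvalMin))) fun z =>
      (Dfun_le_exp θ z).trans <| exp_le_exp.2 <| by
        linarith [div_nonneg (θ.minSqResidual_nonneg z) θ.sigma2Max_pos.le,
          div_nonneg (θ.minSqDist_nonneg z.1) θ.eigvalMax_pos.le]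

theorem statement6_general (d G : ℕ) (hd : 1 ≤ d) (α : ℝ)
    (hα : α ∈ Set.Ioo (0 : ℝ) 1) :
    ∃ C : ℝ, ∀ P : Measure (Vec d × ℝ), IsProbabilityMeasure P →
      ∀ θ : CWMParam d G,
        Lfun α θ P ≤
          -(1 / 2) * (Real.log (⨅ g, θ.sigma2 g) * (P (Aset α θ P)).toReal
              + (∫ z in Aset α θ P,
                  (⨅ g : Fin G, (θ.b0 g + dotProduct (θ.b g) z.1 - z.2) ^ 2) ∂P)
                / (⨆ g, θ.sigma2 g))
          - (1 / 2) * ((d : ℝ) * Real.log (⨅ g : Fin G, ⨅ l : Fin d, θ.eigval g l)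
                * (P (Aset α θ P)).toReal
              + (∫ z in Aset α θ P, (⨅ g : Fin G, ∑ i, (z.1 i - θ.mu g i) ^ 2) ∂P)
                / (⨆ g : Fin G, ⨆ l : Fin d, θ.eigval g l))
          + C := by
  refine ⟨0, fun P hP θ => ?_⟩
  have : Nonempty (Fin d) := Fin.pos_iff_nonempty.mp hd
  have hsmax := θ.sigma2Max_pos
  have hlmax := θ.eigvalMax_pos
  have hbound := setIntegral_le_sub_of_le_sub (P := P) (A := Aset α θ P)
    (u := fun z => θ.minSqResidual z / (2 * θ.sigma2Max))
    (v := fun z => θ.minSqDist z.1 / (2 * θ.eigvalMax))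
    (c := -(1 / 2) * (log θ.sigma2Min + d * log θ.eigvalMin))
    (measurableSet_le measurable_const (measurable_Dfun θ)) (measurable_Dfun θ).log
    (θ.measurable_minSqResidual.div_const _)
    ((θ.measurable_minSqDist.comp measurable_fst).div_const _)
    (fun z => div_nonneg (θ.minSqResidual_nonneg z) (by positivity))
    (fun z => div_nonneg (θ.minSqDist_nonneg z.1) (by positivity))
    (fun z => ((log_le_iff_le_exp (Dfun_pos θ z)).2 (Dfun_le_exp θ z)).trans_eq (by ring))
    (fun z hz => log_le_log (Rfun_pos hα P θ) hz)
  have hsplit : Lfun α θ P ≤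
      -(1 / 2) * (log θ.sigma2Min * (P (Aset α θ P)).toReal
          + (∫ z in Aset α θ P, θ.minSqResidual z ∂P) / θ.sigma2Max)
        - (1 / 2) * (d * log θ.eigvalMin * (P (Aset α θ P)).toReal
          + (∫ z in Aset α θ P, θ.minSqDist z.1 ∂P) / θ.eigvalMax) + 0 := by
    refine hbound.trans_eq ?_
    rw [integral_div, integral_div, measureReal_def]
    ring
  exact hsplit

/-- uniform upper bound for the trimmed log-likelihood in terms of the
smallest/largest error variances and scatter eigenvalues. -/
theorem statement6 (d G : ℕ) (hd : 1 ≤ d) (hG : 1 ≤ G) (α : ℝ)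
    (hα : α ∈ Set.Ioo (0 : ℝ) 1) :
    ∃ C : ℝ, ∀ P : Measure (Vec d × ℝ), IsProbabilityMeasure P →
      ∀ θ : CWMParam d G,
        Lfun α θ P ≤
          -(1 / 2) * (Real.log (⨅ g, θ.sigma2 g) * (P (Aset α θ P)).toReal
              + (∫ z in Aset α θ P,
                  (⨅ g : Fin G, (θ.b0 g + dotProduct (θ.b g) z.1 - z.2) ^ 2) ∂P)
                / (⨆ g, θ.sigma2 g))
          - (1 / 2) * ((d : ℝ) * Real.log (⨅ g : Fin G, ⨅ l : Fin d, θ.eigval g l)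
                * (P (Aset α θ P)).toReal
              + (∫ z in Aset α θ P, (⨅ g : Fin G, ∑ i, (z.1 i - θ.mu g i) ^ 2) ∂P)
                / (⨆ g : Fin G, ⨆ l : Fin d, θ.eigval g l))
          + C :=
  statement6_general d G hd α hα

end
end
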